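/- arXiv:1810.05310 — 3 statements merged into one kernel-verified Lean document; each statement's English description precedes it below -/
import Mathlib

section
/- Let (Z,d,μ_Z) be a metric measure space with μ_Z a doubling Borel measure, let v : Z → ℝ be Lipschitz, let K ⊆ Z, and let z ∈ Z be such that lim_{r→0} μ_Z(B(z,r)∩K)/μ_Z(B(z,r)) = 0. Then limsup_{y→z, y≠z} |v(z) − v(y)|/d(z,y) = limsup_{y→z, y∉K∪{z}} |v(z) − v(y)|/d(z,y), where the limsups are taken along the punctured neighborhood filter of z, respectively its restriction to Z∖K. -/
open MeasureTheory Metric Filter Set Topology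
open scoped NNReal ENNReal

noncomputable section

universe u

/-- The measure `μ` is doubling with constant `Cd`:
`0 < μ(B(x,2r)) ≤ Cd·μ(B(x,r)) < ∞` for every `x` and every `r > 0`. -/
def IsDoublingWith {X : Type u} [PseudoMetricSpace X] [MeasurableSpace X]
    (μ : Measure X) (Cd : ℝ≥0) : Prop :=
  ∀ (x : X) (r : ℝ), 0 < r →
    0 < μ (ball x (2 * r)) ∧
      μ (ball x (2 * r)) ≤ (Cd : ℝ≥0∞) * μ (ball x r) ∧
      (Cd : ℝ≥0∞) * μ (ball x r) < ⊤

/-- `X` is a geodesic space: any two points are joined by a unit-speed geodesic. -/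
def IsGeodesic (X : Type u) [PseudoMetricSpace X] : Prop :=
  ∀ x y : X, ∃ γ : ℝ → X,
    LipschitzOnWith 1 γ (Icc 0 (dist x y)) ∧ γ 0 = x ∧ γ (dist x y) = y

/-- `g` is an upper gradient of `u`: for every `L ≥ 0` and every `1`-Lipschitz curve
`γ : [0,L] → X`, `|u(γ 0) − u(γ L)| ≤ ∫₀^L g(γ t) dt`. -/
def IsUpperGradientOf {X : Type u} [PseudoMetricSpace X] (g u : X → ℝ) : Prop :=
  ∀ L : ℝ, 0 ≤ L → ∀ γ : ℝ → X, LipschitzOnWith 1 γ (Icc 0 L) →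
    |u (γ 0) - u (γ L)| ≤ ∫ t in (0:ℝ)..L, g (γ t)

/-- The lower pointwise Lipschitz constant
`lip u (x) = liminf_{r→0} r⁻¹ sup_{y ∈ B(x,r)} |u y − u x|`. -/
def lipConst {X : Type u} [PseudoMetricSpace X] (u : X → ℝ) (x : X) : ℝ≥0∞ :=
  Filter.liminf
    (fun r : ℝ => ⨆ y ∈ ball x r, ENNReal.ofReal (|u y - u x| / r)) (𝓝[>] (0:ℝ))

/-- `u` is locally Lipschitz on `W`: Lipschitz on every closed bounded subset of `W`. -/
def LocallyLipschitzOnSet {X : Type u} [PseudoMetricSpace X] (u : X → ℝ) (W : Set X) : Prop :=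
  ∀ K : Set X, IsClosed K → Bornology.IsBounded K → K ⊆ W →
    ∃ L : ℝ≥0, LipschitzOnWith L u K

/-- `u i → f` in `L¹_loc(W)`. -/
def TendstoL1loc {X : Type u} [PseudoMetricSpace X] [MeasurableSpace X]
    (μ : Measure X) (u : ℕ → X → ℝ) (f : X → ℝ) (W : Set X) : Prop :=
  ∀ K : Set X, IsClosed K → Bornology.IsBounded K → K ⊆ W →
    Tendsto (fun i => ∫⁻ x in K, ENNReal.ofReal |u i x - f x| ∂μ) atTop (𝓝 0)

/-- Total variation `V(f,W)` of `f` on an open set `W`: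
the infimum over sequences of locally Lipschitz functions converging to `f` in `L¹_loc(W)`
of the liminf of `∫_W lip u_i dμ`. -/
def totVarOn {X : Type u} [PseudoMetricSpace X] [MeasurableSpace X]
    (μ : Measure X) (f : X → ℝ) (W : Set X) : ℝ≥0∞ :=
  ⨅ (us : ℕ → X → ℝ) (_ : ∀ i, LocallyLipschitzOnSet (us i) W)
    (_ : TendstoL1loc μ us f W),
    Filter.liminf (fun i => ∫⁻ x in W, lipConst (us i) x ∂μ) atTop

/-- Total variation `V(f,A)` of `f` on an arbitrary set `A`:
infimum of `V(f,W)` over open `W ⊇ A`. -/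
def totVarSet {X : Type u} [PseudoMetricSpace X] [MeasurableSpace X]
    (μ : Measure X) (f : X → ℝ) (A : Set X) : ℝ≥0∞ :=
  ⨅ (W : Set X) (_ : IsOpen W) (_ : A ⊆ W), totVarOn μ f W

/-- `f` is of bounded variation: locally integrable and `V(f,X) < ∞`. -/
def IsBV {X : Type u} [MetricSpace X] [MeasurableSpace X]
    (μ : Measure X) (f : X → ℝ) : Prop :=
  LocallyIntegrable f μ ∧ totVarOn μ f Set.univ < ⊤

/-- `(X,d,μ)` supports a `1`-Poincaré inequality with constant `CP`. -/
def SupportsPoincare {X : Type u} [MetricSpace X] [MeasurableSpace X]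
    (μ : Measure X) (CP : ℝ) : Prop :=
  ∀ u : X → ℝ, LocallyLipschitzOnSet u Set.univ →
    ∀ g : X → ℝ, (∀ x, 0 ≤ g x) → Measurable g → IsUpperGradientOf g u →
      ∀ (x : X) (r : ℝ), 0 < r →
        (⨍ y in ball x r, |u y - (⨍ z in ball x r, u z ∂μ)| ∂μ) ≤
          CP * r * (⨍ y in ball x r, g y ∂μ)

/-- Standing assumptions: a complete geodesic metric measure space with at least two
points, whose measure is doubling and supports a 1-Poincaré inequality. -/
def GoodSpace (X : Type u) [MetricSpace X] [MeasurableSpace X]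
    (μ : Measure X) (Cd : ℝ≥0) (CP : ℝ) : Prop :=
  Nontrivial X ∧ CompleteSpace X ∧ IsGeodesic X ∧
    IsDoublingWith μ Cd ∧ SupportsPoincare μ CP

/-- The codimension-1 Hausdorff measure
`𝓗(A) = sup_{δ>0} inf { Σ μ(B_i)/r_i : 0 < r_i ≤ δ, A ⊆ ⋃ B_i }`,
the infimum over countable coverings of `A` by balls (balls of nonpositive radius
are empty and contribute `0`). -/
def codimOneH {X : Type u} [PseudoMetricSpace X] [MeasurableSpace X]
    (μ : Measure X) (A : Set X) : ℝ≥0∞ :=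
  ⨆ (δ : ℝ) (_ : 0 < δ),
    ⨅ (c : ℕ → X) (r : ℕ → ℝ) (_ : ∀ i, r i ≤ δ)
      (_ : A ⊆ ⋃ i, ball (c i) (r i)),
      ∑' i, if 0 < r i then μ (ball (c i) (r i)) / ENNReal.ofReal (r i) else 0

/-- The measure theoretic boundary `∂*E`. -/
def measBdry {X : Type u} [PseudoMetricSpace X] [MeasurableSpace X]
    (μ : Measure X) (E : Set X) : Set X :=
  {x : X |
    0 < Filter.limsup (fun r : ℝ => μ (E ∩ ball x r) / μ (ball x r)) (𝓝[>] (0:ℝ)) ∧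
    0 < Filter.limsup (fun r : ℝ => μ (Eᶜ ∩ ball x r) / μ (ball x r)) (𝓝[>] (0:ℝ))}

/-- `A` has density `0` at `x`. -/
def DensityZeroAt {X : Type u} [PseudoMetricSpace X] [MeasurableSpace X]
    (μ : Measure X) (A : Set X) (x : X) : Prop :=
  Tendsto (fun r : ℝ => μ (A ∩ ball x r) / μ (ball x r)) (𝓝[>] (0:ℝ)) (𝓝 0)

/-- `A` has density `1` at `x`. -/
def DensityOneAt {X : Type u} [PseudoMetricSpace X] [MeasurableSpace X]
    (μ : Measure X) (A : Set X) (x : X) : Prop :=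
  Tendsto (fun r : ℝ => μ (A ∩ ball x r) / μ (ball x r)) (𝓝[>] (0:ℝ)) (𝓝 1)

/-- `x` is a Lebesgue point of `u`. -/
def LebesguePointOf {X : Type u} [MetricSpace X] [MeasurableSpace X]
    (μ : Measure X) (u : X → ℝ) (x : X) : Prop :=
  Tendsto (fun r : ℝ => ⨍ y in ball x r, |u y - u x| ∂μ) (𝓝[>] (0:ℝ)) (𝓝 0)

/-- `u` is a Borel representative whose value at each Lebesgue point equals the limit
of its ball averages. -/
def PreciseRep {X : Type u} [MetricSpace X] [MeasurableSpace X]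
    (μ : Measure X) (u : X → ℝ) : Prop :=
  Measurable u ∧ ∀ (x : X) (c : ℝ),
    Tendsto (fun r : ℝ => ⨍ y in ball x r, u y ∂μ) (𝓝[>] (0:ℝ)) (𝓝 c) → u x = c

/-- The restricted maximal function `M_R ν (x) = sup_{0<r≤R} ν(B(x,r))/μ(B(x,r))`. -/
def restrMaximal {X : Type u} [PseudoMetricSpace X] [MeasurableSpace X]
    (μ ν : Measure X) (R : ℝ) (x : X) : ℝ≥0∞ :=
  ⨆ (r : ℝ) (_ : 0 < r) (_ : r ≤ R), ν (ball x r) / μ (ball x r)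

/-- `F_g(x,y)`: the infimum of `∫_γ g ds` over 1-Lipschitz curves `γ : [0,L] → Z`
joining `x` to `y` (the infimum over the empty set is `∞`). -/
def curveInf {Z : Type u} [PseudoMetricSpace Z] (g : Z → ℝ) (x y : Z) : ℝ≥0∞ :=
  ⨅ (L : ℝ) (_ : 0 ≤ L) (γ : ℝ → Z) (_ : LipschitzOnWith 1 γ (Icc 0 L))
    (_ : γ 0 = x) (_ : γ L = y),
    ∫⁻ t in Icc (0:ℝ) L, ENNReal.ofReal (g (γ t))

/-- Weak-star convergence of measures: test against continuous, compactly
supported functions. -/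
def WeakStar {Z : Type u} [MetricSpace Z] [MeasurableSpace Z]
    (ν : ℕ → Measure Z) (m : Measure Z) : Prop :=
  ∀ φ : Z → ℝ, Continuous φ → HasCompactSupport φ →
    Tendsto (fun n => ∫ x, φ x ∂(ν n)) atTop (𝓝 (∫ x, φ x ∂m))

/-- `φ ∈ BV_c(U)`: a BV function whose support is compact and contained in `U`. -/
def MemBVc {X : Type u} [MetricSpace X] [MeasurableSpace X]
    (μ : Measure X) (φ : X → ℝ) (U : Set X) : Prop :=
  IsBV μ φ ∧ IsCompact (tsupport φ) ∧ tsupport φ ⊆ U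


lemma my_doubling_fin {Z : Type u} [MetricSpace Z] [MeasurableSpace Z]
    {μZ : Measure Z} {Cd : ℝ≥0} (hdbl : IsDoublingWith μZ Cd) (x : Z) {r : ℝ} (hr : 0 < r) :
    0 < μZ (ball x r) ∧ μZ (ball x r) ≠ ⊤ := by
  obtain ⟨h1, -, -⟩ := hdbl x (r / 2) (by linarith)
  obtain ⟨-, h2, h3⟩ := hdbl x r hr
  constructor
  · have e : (2 : ℝ) * (r / 2) = r := by ring
    rwa [e] at h1
  · have hm : μZ (ball x r) ≤ μZ (ball x (2 * r)) :=
      measure_mono (ball_subset_ball (by linarith))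
    exact ne_top_of_le_ne_top (ne_top_of_lt h3) (hm.trans h2)

lemma my_doubling_iter {Z : Type u} [MetricSpace Z] [MeasurableSpace Z]
    {μZ : Measure Z} {Cd : ℝ≥0} (hdbl : IsDoublingWith μZ Cd) (x : Z) {s : ℝ} (hs : 0 < s)
    (k : ℕ) : μZ (ball x (2 ^ k * s)) ≤ (Cd : ℝ≥0∞) ^ k * μZ (ball x s) := by
  induction k with
  | zero => simp
  | succ n ih =>
    have hs' : 0 < 2 ^ n * s := by positivity
    have hd := (hdbl x (2 ^ n * s) hs').2.1
    have h2 : (2 : ℝ) ^ (n + 1) * s = 2 * (2 ^ n * s) := by ring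
    rw [h2]
    calc μZ (ball x (2 * (2 ^ n * s))) ≤ (Cd : ℝ≥0∞) * μZ (ball x (2 ^ n * s)) := hd
      _ ≤ (Cd : ℝ≥0∞) * ((Cd : ℝ≥0∞) ^ n * μZ (ball x s)) := mul_le_mul_right ih _
      _ = (Cd : ℝ≥0∞) ^ (n + 1) * μZ (ball x s) := by rw [pow_succ]; ring

set_option maxHeartbeats 2000000 in
theorem statement8 {Z : Type u} [MetricSpace Z] [MeasurableSpace Z] [BorelSpace Z]
    (μZ : Measure Z) (Cd : ℝ≥0) (hCd : 1 ≤ Cd) (hdbl : IsDoublingWith μZ Cd)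
    (v : Z → ℝ) (L : ℝ≥0) (hv : LipschitzWith L v)
    (K : Set Z) (z : Z) (hK : DensityZeroAt μZ K z) :
    Filter.limsup (fun y => |v z - v y| / dist z y) (𝓝[≠] z) =
      Filter.limsup (fun y => |v z - v y| / dist z y) (𝓝[(K ∪ {z})ᶜ] z) := by
  classical
  set f : Z → ℝ := fun y => |v z - v y| / dist z y with hfdef
  have hf0 : ∀ y, 0 ≤ f y := fun y => div_nonneg (abs_nonneg _) dist_nonneg
  have hfL : ∀ y, f y ≤ (L : ℝ) := by
    intro y
    rcases eq_or_lt_of_le (dist_nonneg : (0 : ℝ) ≤ dist z y) with h | h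
    · show |v z - v y| / dist z y ≤ (L : ℝ)
      rw [← h, div_zero]
      exact L.coe_nonneg
    · show |v z - v y| / dist z y ≤ (L : ℝ)
      rw [div_le_iff₀ h]
      have := hv.dist_le_mul z y
      rwa [Real.dist_eq] at this
  have hsub : ((K ∪ {z})ᶜ : Set Z) ⊆ ({z}ᶜ : Set Z) :=
    compl_subset_compl.2 subset_union_right
  by_cases hbot : (𝓝[≠] z) = ⊥
  · have hG : 𝓝[(K ∪ {z})ᶜ] z = ⊥ :=
      bot_unique (le_trans (nhdsWithin_mono z hsub) hbot.le)
    rw [hbot, hG]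
  haveI hne : (𝓝[≠] z).NeBot := ⟨hbot⟩
  -- Key lemma: near z, any point has a nearby point outside K ∪ {z}
  have key : ∀ δ : ℝ, 0 < δ → δ < 1 →
      ∃ r₁ > 0, ∀ y : Z, y ≠ z → dist z y < r₁ →
        ∃ y' : Z, y' ∉ K ∧ y' ≠ z ∧ dist y y' < δ * dist z y := by
    intro δ hδ0 hδ1
    obtain ⟨k, hk⟩ := pow_unbounded_of_one_lt (3 / δ) (one_lt_two (α := ℝ))
    have hCd0 : (Cd : ℝ≥0∞) ≠ 0 := by
      simp only [ne_eq, ENNReal.coe_eq_zero]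
      exact fun h => by simp [h] at hCd
    have hCdk0 : ((Cd : ℝ≥0∞)) ^ k ≠ 0 := pow_ne_zero _ hCd0
    have hCdkt : ((Cd : ℝ≥0∞)) ^ k ≠ ⊤ := by
      exact ENNReal.pow_ne_top ENNReal.coe_ne_top
    set η : ℝ≥0∞ := (((Cd : ℝ≥0∞)) ^ k)⁻¹ with hηdef
    have hη0 : 0 < η := ENNReal.inv_pos.mpr hCdkt
    have hev : ∀ᶠ r in 𝓝[>] (0 : ℝ),
        μZ (K ∩ ball z r) / μZ (ball z r) < η := hK.eventually (gt_mem_nhds hη0)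
    obtain ⟨ε, hε, hεsub⟩ := Metric.mem_nhdsWithin_iff.1 hev
    refine ⟨ε / 2, by positivity, ?_⟩
    intro y hyz hyd
    set d := dist z y with hddef
    have hd0 : 0 < d := dist_pos.2 (Ne.symm hyz)
    have h2d : (2 * d) ∈ Metric.ball (0 : ℝ) ε ∩ Set.Ioi (0 : ℝ) := by
      constructor
      · rw [Metric.mem_ball, Real.dist_eq]
        rw [abs_of_pos (by linarith)]
        linarith
      · exact Set.mem_Ioi.2 (by positivity)
    have hratio : μZ (K ∩ ball z (2 * d)) / μZ (ball z (2 * d)) < η := hεsub h2d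
    obtain ⟨hpos2d, hfin2d⟩ := my_doubling_fin hdbl z (show (0:ℝ) < 2 * d by linarith)
    have hlt : μZ (K ∩ ball z (2 * d)) < η * μZ (ball z (2 * d)) :=
      (ENNReal.div_lt_iff (Or.inl hpos2d.ne') (Or.inl hfin2d)).1 hratio
    have hball1 : ball z (2 * d) ⊆ ball y (2 ^ k * (δ * d)) := by
      have h3 : (3 : ℝ) * d ≤ 2 ^ k * (δ * d) := by
        have h3' : 3 / δ ≤ 2 ^ k := hk.le
        rw [div_le_iff₀ hδ0] at h3'
        nlinarith
      refine subset_trans ?_ (ball_subset_ball h3)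
      intro x hx
      rw [mem_ball] at hx ⊢
      have ht := dist_triangle x z y
      have hzy : dist z y = d := rfl
      rw [dist_comm z y] at hzy
      calc dist x y ≤ dist x z + dist z y := dist_triangle x z y
        _ < 2 * d + d := by
            have : dist z y = d := rfl
            linarith [hx, this.le]
        _ = 3 * d := by ring
    have hiter := my_doubling_iter hdbl y (show (0:ℝ) < δ * d by positivity) k
    have hchain : μZ (ball z (2 * d)) ≤ (Cd : ℝ≥0∞) ^ k * μZ (ball y (δ * d)) :=
      (measure_mono hball1).trans hiter
    have hfinal : μZ (K ∩ ball z (2 * d)) < μZ (ball y (δ * d)) := by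
      calc μZ (K ∩ ball z (2 * d)) < η * μZ (ball z (2 * d)) := hlt
        _ ≤ η * ((Cd : ℝ≥0∞) ^ k * μZ (ball y (δ * d))) := mul_le_mul_right hchain _
        _ = μZ (ball y (δ * d)) := by
            rw [← mul_assoc, hηdef, ENNReal.inv_mul_cancel hCdk0 hCdkt, one_mul]
    have hnot : ¬ (ball y (δ * d) ⊆ K) := by
      intro hsubK
      have hb2 : ball y (δ * d) ⊆ K ∩ ball z (2 * d) := by
        intro x hx
        refine ⟨hsubK hx, ?_⟩
        rw [mem_ball] at hx ⊢
        calc dist x z ≤ dist x y + dist y z := dist_triangle x y z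
          _ < δ * d + d := by rw [dist_comm y z]; linarith [hx]
          _ < 2 * d := by nlinarith
      exact absurd (measure_mono hb2) (not_le.2 hfinal)
    obtain ⟨y', hy'ball, hy'K⟩ := not_subset.1 hnot
    rw [mem_ball] at hy'ball
    refine ⟨y', hy'K, ?_, by rw [dist_comm]; exact hy'ball⟩
    intro hzeq
    have hcomm : dist y' y = d := by rw [hzeq]
    rw [hcomm] at hy'ball
    nlinarith [mul_pos (sub_pos.2 hδ1) hd0]
  -- the restricted filter is nontrivial
  haveI hGne : (𝓝[(K ∪ {z})ᶜ] z).NeBot := by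
    rw [← mem_closure_iff_nhdsWithin_neBot, Metric.mem_closure_iff]
    intro ε hε
    obtain ⟨r₁, hr₁, hC⟩ := key (1 / 2) (by norm_num) (by norm_num)
    have hz : z ∈ closure ({z}ᶜ : Set Z) := mem_closure_iff_nhdsWithin_neBot.2 hne
    obtain ⟨y, hy, hyd⟩ := Metric.mem_closure_iff.1 hz (min r₁ ε / 2)
      (by positivity)
    have hyne : y ≠ z := Set.mem_compl_singleton_iff.1 hy
    have hyr : dist z y < r₁ := lt_of_lt_of_le hyd (by
      have := min_le_left r₁ ε; linarith)
    obtain ⟨y', hy'K, hy'z, hy'd⟩ := hC y hyne hyr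
    refine ⟨y', ?_, ?_⟩
    · simp only [Set.mem_compl_iff, Set.mem_union, Set.mem_singleton_iff]
      push_neg
      exact ⟨hy'K, hy'z⟩
    · have h1 : dist z y' ≤ dist z y + dist y y' := dist_triangle z y y'
      have h2 : dist z y < ε / 2 := lt_of_lt_of_le hyd (by
        have := min_le_right r₁ ε; linarith)
      nlinarith [dist_nonneg (x := z) (y := y)]
  have hcoG : (𝓝[(K ∪ {z})ᶜ] z).IsCoboundedUnder (· ≤ ·) f :=
    isCoboundedUnder_le_of_le _ hf0
  have hcoF : (𝓝[≠] z).IsCoboundedUnder (· ≤ ·) f :=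
    isCoboundedUnder_le_of_le _ hf0
  have hbdF : (𝓝[≠] z).IsBoundedUnder (· ≤ ·) f :=
    Filter.isBoundedUnder_of ⟨(L : ℝ), hfL⟩
  have hbdG : (𝓝[(K ∪ {z})ᶜ] z).IsBoundedUnder (· ≤ ·) f :=
    Filter.isBoundedUnder_of ⟨(L : ℝ), hfL⟩
  have hle1 : Filter.limsup f (𝓝[(K ∪ {z})ᶜ] z) ≤ Filter.limsup f (𝓝[≠] z) :=
    Filter.limsup_le_limsup_of_le (nhdsWithin_mono z hsub) hcoG hbdF
  refine le_antisymm ?_ hle1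
  set S := Filter.limsup f (𝓝[(K ∪ {z})ᶜ] z) with hSdef
  have hS_L : S ≤ (L : ℝ) :=
    Filter.limsup_le_of_le hcoG (Filter.Eventually.of_forall hfL)
  have hS0 : (0 : ℝ) ≤ S :=
    Filter.le_limsup_of_frequently_le
      ((Filter.Eventually.of_forall hf0).frequently) hbdG
  apply le_of_forall_pos_le_add
  intro ε hε
  -- choose δ
  set δ : ℝ := min (1 / 2) (ε / (2 * (2 * (L : ℝ) + ε + 1))) with hδdef
  have hL0 : (0 : ℝ) ≤ (L : ℝ) := L.coe_nonneg
  have hδ0 : 0 < δ := by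
    apply lt_min (by norm_num)
    positivity
  have hδ1 : δ < 1 := lt_of_le_of_lt (min_le_left _ _) (by norm_num)
  have hδ2 : δ ≤ ε / (2 * (2 * (L : ℝ) + ε + 1)) := min_le_right _ _
  have hδkey : δ * (2 * (L : ℝ) + ε / 2) ≤ ε / 2 := by
    have hden : 0 < 2 * (2 * (L : ℝ) + ε + 1) := by positivity
    rw [le_div_iff₀ hden] at hδ2
    nlinarith
  have hevG : ∀ᶠ y in 𝓝[(K ∪ {z})ᶜ] z, f y < S + ε / 2 :=
    Filter.eventually_lt_of_limsup_lt (by linarith) hbdG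
  obtain ⟨r₀, hr₀, hG0⟩ := Metric.mem_nhdsWithin_iff.1 hevG
  obtain ⟨r₁, hr₁, hC⟩ := key δ hδ0 hδ1
  have hfinal : ∀ᶠ y in 𝓝[≠] z, f y ≤ S + ε := by
    apply Metric.mem_nhdsWithin_iff.2
    refine ⟨min r₀ r₁ / 2, by positivity, ?_⟩
    rintro y ⟨hyball, hyne⟩
    rw [mem_ball] at hyball
    have hyne' : y ≠ z := Set.mem_compl_singleton_iff.1 hyne
    set d := dist z y with hddef
    have hd0 : 0 < d := dist_pos.2 (Ne.symm hyne')
    have hdzy : dist y z = d := dist_comm y z ▸ rfl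
    have hdr : d < min r₀ r₁ / 2 := by rw [← hdzy]; exact hyball
    have hdr₀ : d < r₀ := by
      have := min_le_left r₀ r₁; linarith
    have hdr₁ : d < r₁ := by
      have := min_le_right r₀ r₁; linarith
    simp only [Set.mem_setOf_eq]
    by_cases hyK : y ∈ K
    · -- use a nearby point outside K
      obtain ⟨y', hy'K, hy'z, hy'd⟩ := hC y hyne' hdr₁
      have hdzy' : dist z y' ≤ (1 + δ) * d := by
        calc dist z y' ≤ dist z y + dist y y' := dist_triangle z y y'
          _ ≤ d + δ * d := by linarith
          _ = (1 + δ) * d := by ring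
      have hy'mem : y' ∈ ball z r₀ ∩ (K ∪ {z})ᶜ := by
        constructor
        · rw [mem_ball, dist_comm]
          have hmin : min r₀ r₁ ≤ r₀ := min_le_left _ _
          calc dist z y' ≤ (1 + δ) * d := hdzy'
            _ < 2 * d := by nlinarith
            _ < min r₀ r₁ := by linarith
            _ ≤ r₀ := hmin
        · simp only [Set.mem_compl_iff, Set.mem_union, Set.mem_singleton_iff]
          push_neg
          exact ⟨hy'K, hy'z⟩
      have hfy' : f y' < S + ε / 2 := hG0 hy'mem
      have hdzy'0 : 0 < dist z y' := dist_pos.2 (Ne.symm hy'z)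
      have h2 : |v z - v y'| < (S + ε / 2) * dist z y' := by
        have : |v z - v y'| / dist z y' < S + ε / 2 := hfy'
        rwa [div_lt_iff₀ hdzy'0] at this
      have h2' : |v z - v y'| ≤ (S + ε / 2) * ((1 + δ) * d) := by
        have hS2 : 0 ≤ S + ε / 2 := by linarith
        nlinarith
      have h3 : |v y' - v y| ≤ (L : ℝ) * (δ * d) := by
        have hlip := hv.dist_le_mul y' y
        rw [Real.dist_eq] at hlip
        have hdy'y : dist y' y < δ * d := by rw [dist_comm]; exact hy'd
        nlinarith
      have h1 : |v z - v y| ≤ |v z - v y'| + |v y' - v y| := abs_sub_le _ _ _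
      show |v z - v y| / d ≤ S + ε
      rw [div_le_iff₀ hd0]
      have hexp : (S + ε / 2) * ((1 + δ) * d) + (L : ℝ) * (δ * d) ≤ (S + ε) * d := by
        nlinarith [mul_le_mul_of_nonneg_right hδkey hd0.le,
          mul_nonneg (mul_nonneg hδ0.le hd0.le) (sub_nonneg.2 hS_L)]
      linarith
    · have hymem : y ∈ ball z r₀ ∩ (K ∪ {z})ᶜ := by
        constructor
        · rw [mem_ball]; rw [hdzy]; exact hdr₀
        · simp only [Set.mem_compl_iff, Set.mem_union, Set.mem_singleton_iff]
          push_neg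
          exact ⟨hyK, hyne'⟩
      have := hG0 hymem
      show |v z - v y| / d ≤ S + ε
      have hfy : f y < S + ε / 2 := this
      calc |v z - v y| / d = f y := rfl
        _ ≤ S + ε := by linarith
  exact Filter.limsup_le_of_le hcoF hfinal

end
end

section
/- Let Z be a proper metric space, τ > 0, and g : Z → [τ,∞) a lower semicontinuous function. If x_n → x and y_n → y are convergent sequences in Z, then F_g(x,y) ≤ liminf_{n→∞} F_g(x_n,y_n). -/
open MeasureTheory Metric Filter Set Topology
open scoped NNReal ENNReal

noncomputable section

universe u

/-! Fix `M` above the liminf. Along a subsequence there are `1`-Lipschitz curves from `xₙ` to `yₙ`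
of cost `< M`, and since `g ≥ τ` their lengths are at most `M / τ`. Extended to `ℝ` by constancy,
these curves are equi-Lipschitz with values in a proper space, so by an Arzelà–Ascoli argument a
further subsequence converges pointwise, with converging lengths, to a `1`-Lipschitz curve from
`x` to `y`. Lower semicontinuity of `g` and Fatou's lemma bound the cost of the limit curve
by `M`. -/

section LipschitzCurves

variable {X Z : Type*} [PseudoMetricSpace X] [PseudoMetricSpace Z] {K : ℝ≥0}

theorem LipschitzWith.cauchySeq_apply_of_dense {F : ℕ → X → Z} (hF : ∀ n, LipschitzWith K (F n))
    {S : Set X} (hS : Dense S) (hcauchy : ∀ s ∈ S, CauchySeq (F · s)) (x : X) :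
    CauchySeq (F · x) := by
  rw [Metric.cauchySeq_iff]
  intro ε hε
  obtain ⟨s, hsS, hxs⟩ := hS.exists_dist_lt x (by positivity : 0 < ε / (3 * (K + 1)))
  obtain ⟨N, hN⟩ := Metric.cauchySeq_iff.1 (hcauchy s hsS) (ε / 3) (by positivity)
  have hK : (K : ℝ) * dist x s < ε / 3 := by
    rw [lt_div_iff₀ (by positivity)] at hxs
    nlinarith [dist_nonneg (x := x) (y := s), K.coe_nonneg]
  refine ⟨N, fun m hm n hn => ?_⟩
  calc dist (F m x) (F n x) ≤ dist (F m x) (F m s) + dist (F m s) (F n s) + dist (F n s) (F n x) :=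
        dist_triangle4 _ _ _ _
    _ ≤ K * dist x s + dist (F m s) (F n s) + K * dist x s := by
        gcongr
        · exact (hF m).dist_le_mul x s
        · rw [dist_comm x s]; exact (hF n).dist_le_mul s x
    _ < ε / 3 + ε / 3 + ε / 3 := by gcongr; exact hN m hm n hn
    _ = ε := by ring

theorem LipschitzWith.tendsto_apply_of_tendsto {ι : Type*} {l : Filter ι} {F : ι → X → Z}
    (hF : ∀ i, LipschitzWith K (F i)) {f : X → Z} (hFf : ∀ x, Tendsto (F · x) l (𝓝 (f x)))
    {u : ι → X} {x : X} (hu : Tendsto u l (𝓝 x)) :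
    Tendsto (fun i => F i (u i)) l (𝓝 (f x)) := by
  rw [tendsto_iff_dist_tendsto_zero] at hu ⊢
  have hbound : ∀ i, dist (F i (u i)) (f x) ≤ K * dist (u i) x + dist (F i x) (f x) := fun i =>
    (dist_triangle _ _ _).trans (add_le_add_left ((hF i).dist_le_mul _ _) _)
  have hlim : Tendsto (fun i => K * dist (u i) x + dist (F i x) (f x)) l (𝓝 0) := by
    simpa using (hu.const_mul (K : ℝ)).add (tendsto_iff_dist_tendsto_zero.1 (hFf x))
  exact squeeze_zero (fun _ => dist_nonneg) hbound hlim

end LipschitzCurves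

theorem LipschitzWith.exists_subseq_tendsto {Z : Type*} [MetricSpace Z] [ProperSpace Z]
    {K : ℝ≥0} {γ : ℕ → ℝ → Z} (hγ : ∀ n, LipschitzWith K (γ n))
    (hbdd : Bornology.IsBounded (range fun n => γ n 0)) :
    ∃ φ : ℕ → ℕ, StrictMono φ ∧ ∃ γ' : ℝ → Z, LipschitzWith K γ' ∧
      ∀ t, Tendsto (fun n => γ (φ n) t) atTop (𝓝 (γ' t)) := by
  obtain ⟨R, hR⟩ := hbdd.subset_closedBall (γ 0 0)
  have hmem : ∀ n t, γ n t ∈ closedBall (γ 0 0) (K * |t| + R) := fun n t =>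
    calc dist (γ n t) (γ 0 0) ≤ dist (γ n t) (γ n 0) + dist (γ n 0) (γ 0 0) := dist_triangle _ _ _
      _ ≤ K * |t| + R := by
        gcongr
        · simpa [Real.dist_eq] using (hγ n).dist_le_mul t 0
        · exact hR (mem_range_self n)
  -- `ℚ → Z` is first countable, so Tychonoff gives a subsequence converging at rational times.
  obtain ⟨f, -, φ, hφ, hf⟩ :=
    (isCompact_univ_pi fun q : ℚ => isCompact_closedBall (γ 0 0) (K * |(q : ℝ)| + R)).tendsto_subseq
      (x := fun n (q : ℚ) => γ n q) fun n q _ => hmem n q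
  have hcauchy : ∀ t, CauchySeq fun n => γ (φ n) t :=
    LipschitzWith.cauchySeq_apply_of_dense (fun n => hγ (φ n)) Rat.denseRange_cast
      (by rintro _ ⟨q, rfl⟩; exact (tendsto_pi_nhds.1 hf q).cauchySeq)
  choose γ' hγ' using fun t => cauchySeq_tendsto_of_complete (hcauchy t)
  exact ⟨φ, hφ, γ', (isClosed_setOfPred_lipschitzWith K).mem_of_tendsto (tendsto_pi_nhds.2 hγ')
    (Eventually.of_forall fun n => hγ (φ n)), hγ'⟩

theorem lintegral_Icc_le_liminf_of_tendsto {Z : Type*} [TopologicalSpace Z] {G : Z → ℝ≥0∞}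
    (hG : LowerSemicontinuous G) {γ : ℕ → ℝ → Z} (hγ : ∀ n, Continuous (γ n)) {γ' : ℝ → Z}
    (hγγ' : ∀ t, Tendsto (fun n => γ n t) atTop (𝓝 (γ' t))) {L : ℕ → ℝ} {L' : ℝ}
    (hL : Tendsto L atTop (𝓝 L')) :
    ∫⁻ t in Icc 0 L', G (γ' t) ≤ liminf (fun n => ∫⁻ t in Icc 0 (L n), G (γ n t)) atTop := by
  have hpoint : ∀ t, (Ico 0 L').indicator (fun t => G (γ' t)) t ≤
      liminf (fun n => (Icc 0 (L n)).indicator (fun t => G (γ n t)) t) atTop := by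
    intro t
    by_cases ht : t ∈ Ico 0 L'
    · have hev : ∀ᶠ n in atTop, (Icc 0 (L n)).indicator (fun t => G (γ n t)) t = G (γ n t) := by
        filter_upwards [hL.eventually (eventually_gt_nhds ht.2)] with n hn
        exact indicator_of_mem (show t ∈ Icc 0 (L n) from ⟨ht.1, hn.le⟩) _
      rw [indicator_of_mem ht, liminf_congr hev]
      exact (hG.le_liminf _).trans (liminf_le_liminf_of_le (hγγ' t))
    · simp [indicator_of_notMem ht]
  have hmeas : ∀ n, Measurable ((Icc 0 (L n)).indicator fun t => G (γ n t)) := fun n =>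
    (hG.comp (hγ n)).measurable.indicator measurableSet_Icc
  calc ∫⁻ t in Icc 0 L', G (γ' t) = ∫⁻ t in Ico 0 L', G (γ' t) :=
        (setLIntegral_congr Ico_ae_eq_Icc).symm
    _ = ∫⁻ t, (Ico 0 L').indicator (fun t => G (γ' t)) t :=
        (lintegral_indicator measurableSet_Ico _).symm
    _ ≤ ∫⁻ t, liminf (fun n => (Icc 0 (L n)).indicator (fun t => G (γ n t)) t) atTop :=
        lintegral_mono hpoint
    _ ≤ liminf (fun n => ∫⁻ t, (Icc 0 (L n)).indicator (fun t => G (γ n t)) t) atTop :=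
        lintegral_liminf_le hmeas
    _ = liminf (fun n => ∫⁻ t in Icc 0 (L n), G (γ n t)) atTop := by
        simp only [lintegral_indicator measurableSet_Icc]

theorem le_toReal_div_of_lintegral_Icc_le {Z : Type*} {g : Z → ℝ} {τ : ℝ} (hτ : 0 < τ)
    (hgτ : ∀ w, τ ≤ g w) {L : ℝ} {γ : ℝ → Z} {c : ℝ≥0∞} (hc : c ≠ ⊤)
    (h : ∫⁻ t in Icc 0 L, ENNReal.ofReal (g (γ t)) ≤ c) :
    L ≤ c.toReal / τ := by
  have hτL : ENNReal.ofReal (τ * L) ≤ c :=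
    calc ENNReal.ofReal (τ * L) = ∫⁻ _ in Icc 0 L, ENNReal.ofReal τ := by
          rw [setLIntegral_const, Real.volume_Icc, sub_zero, ENNReal.ofReal_mul hτ.le]
      _ ≤ ∫⁻ t in Icc 0 L, ENNReal.ofReal (g (γ t)) :=
          lintegral_mono fun t => ENNReal.ofReal_le_ofReal (hgτ _)
      _ ≤ c := h
  rw [le_div_iff₀ hτ, mul_comm]
  exact (ENNReal.ofReal_le_iff_le_toReal hc).1 hτL

section curveInf

variable {Z : Type*} [PseudoMetricSpace Z] {g : Z → ℝ} {x y : Z}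

theorem curveInf_le_lintegral {L : ℝ} (hL : 0 ≤ L) {γ : ℝ → Z} (hγ : LipschitzWith 1 γ)
    (hx : γ 0 = x) (hy : γ L = y) :
    curveInf g x y ≤ ∫⁻ t in Icc 0 L, ENNReal.ofReal (g (γ t)) :=
  iInf₂_le_of_le L hL <| iInf₂_le_of_le γ hγ.lipschitzOnWith <| iInf₂_le hx hy

theorem exists_lipschitzWith_of_curveInf_lt {c : ℝ≥0∞} (h : curveInf g x y < c) :
    ∃ L, 0 ≤ L ∧ ∃ γ : ℝ → Z, LipschitzWith 1 γ ∧ γ 0 = x ∧ γ L = y ∧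
      ∫⁻ t in Icc 0 L, ENNReal.ofReal (g (γ t)) < c := by
  simp only [curveInf, iInf_lt_iff] at h
  obtain ⟨L, hL, γ, hγ, hx, hy, hlt⟩ := h
  -- Precomposing with the projection onto `[0, L]` makes the curve globally `1`-Lipschitz.
  refine ⟨L, hL, fun t => γ (projIcc 0 L hL t), ?_, ?_, ?_, ?_⟩
  · have h := hγ.to_restrict.comp (LipschitzWith.projIcc hL)
    rwa [mul_one] at h
  · simpa [projIcc_of_le_left] using hx
  · simpa [projIcc_of_right_le] using hy
  · refine lt_of_eq_of_lt (setLIntegral_congr_fun measurableSet_Icc fun t ht => ?_) hlt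
    simp only [projIcc_of_mem hL ht]

end curveInf

theorem statement15 {Z : Type u} [MetricSpace Z] [ProperSpace Z]
    (τ : ℝ) (hτ : 0 < τ) (g : Z → ℝ) (hg : LowerSemicontinuous g)
    (hgτ : ∀ w : Z, τ ≤ g w)
    (x y : Z) (xn yn : ℕ → Z)
    (hx : Tendsto xn atTop (𝓝 x)) (hy : Tendsto yn atTop (𝓝 y)) :
    curveInf g x y ≤ Filter.liminf (fun n => curveInf g (xn n) (yn n)) atTop := by
  refine le_of_forall_gt_imp_ge_of_dense fun M hM => ?_
  obtain rfl | hMtop := eq_or_ne M ⊤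
  · exact le_top
  obtain ⟨φ, hφ, hφM⟩ :=
    extraction_of_frequently_atTop (frequently_lt_of_liminf_lt (by isBoundedDefault) hM)
  choose L hL0 γ hγ hγx hγy hγM using fun k => exists_lipschitzWith_of_curveInf_lt (hφM k)
  have hLB : ∀ k, L k ∈ Icc 0 (M.toReal / τ) := fun k =>
    ⟨hL0 k, le_toReal_div_of_lintegral_Icc_le hτ hgτ hMtop (hγM k).le⟩
  have hγ0 : Tendsto (fun k => γ k 0) atTop (𝓝 x) := by
    simp only [hγx]
    exact hx.comp hφ.tendsto_atTop
  obtain ⟨ψ, hψ, γ', hγ', hγγ'⟩ :=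
    LipschitzWith.exists_subseq_tendsto hγ (isBounded_range_of_tendsto _ hγ0)
  obtain ⟨L', hL', ρ, hρ, hLρ⟩ := isCompact_Icc.tendsto_subseq fun k => hLB (ψ k)
  have hconv : ∀ t, Tendsto (fun k => γ (ψ (ρ k)) t) atTop (𝓝 (γ' t)) := fun t =>
    (hγγ' t).comp hρ.tendsto_atTop
  have hγ'x : γ' 0 = x := tendsto_nhds_unique (hconv 0) (hγ0.comp (hψ.comp hρ).tendsto_atTop)
  have hγ'y : γ' L' = y := by
    have hend := LipschitzWith.tendsto_apply_of_tendsto (fun k => hγ (ψ (ρ k))) hconv hLρ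
    simp only [Function.comp_def, hγy] at hend
    exact tendsto_nhds_unique hend (hy.comp (hφ.comp (hψ.comp hρ)).tendsto_atTop)
  have hG : LowerSemicontinuous fun z => ENNReal.ofReal (g z) :=
    ENNReal.continuous_ofReal.comp_lowerSemicontinuous hg ENNReal.ofReal_mono
  calc curveInf g x y ≤ ∫⁻ t in Icc 0 L', ENNReal.ofReal (g (γ' t)) :=
        curveInf_le_lintegral hL'.1 hγ' hγ'x hγ'y
    _ ≤ liminf (fun k => ∫⁻ t in Icc 0 (L (ψ (ρ k))), ENNReal.ofReal (g (γ (ψ (ρ k)) t))) atTop :=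
        lintegral_Icc_le_liminf_of_tendsto hG (fun k => (hγ _).continuous) hconv hLρ
    _ ≤ M := liminf_le_of_frequently_le' (Frequently.of_forall fun k => (hγM _).le)

end
end

section
/- Let f : X → [0,∞) be Lipschitz, let τ > 0, and let g : X → [τ,∞) be a bounded lower semicontinuous function with countable range, g ∈ L¹_loc(X), which is an upper gradient of f. Then there exist Lipschitz functions f_k : X → ℝ with f_k → f in L¹_loc(X) and bounded Lipschitz functions g_k : X → [τ,∞) such that each g_k is an upper gradient of f_k, g_k ≤ g_{k+1} ≤ g pointwise, g_k → g pointwise everywhere on X (monotonically increasing), and g_k → g in L¹_loc(X). -/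
open MeasureTheory Metric Filter Set Topology
open scoped NNReal ENNReal

noncomputable section

universe u

/-!
The approximants are the Moreau–Yosida regularizations `gₖ = inf_y (g y + k · d(·, y))`, which
are `k`-Lipschitz, lie between `τ` and `g`, and increase to `g` because `g` is lower
semicontinuous, and `fₖ x = inf_γ (f (γ L) + ∫₀ᴸ gₖ ∘ γ)` over `1`-Lipschitz curves `γ : [0, L] → X`
starting at `x`. Concatenating curves shows that `gₖ` is an upper gradient of `fₖ`, hence `fₖ` is
Lipschitz along geodesics; moreover `0 ≤ fₖ ≤ f` and `fₖ` increases with `k`. If `lim fₖ x < f x`,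
the almost minimizing curves have length at most `f x / τ`, and since a complete doubling space is
proper, Arzelà–Ascoli yields a limit curve along which the `g`-cost is still below `f x`,
contradicting that `g` is an upper gradient of `f`. Convergence in `L¹_loc` follows by dominated
convergence.
-/

lemma exists_maximal_isSeparated {X : Type*} [PseudoEMetricSpace X] (ε : ℝ≥0∞) (s : Set X) :
    ∃ N, Maximal (fun N => N ⊆ s ∧ IsSeparated ε N) N :=
  zorn_subset {N | N ⊆ s ∧ IsSeparated ε N} fun c hcS hc =>
    ⟨⋃₀ c, ⟨sUnion_subset fun _ ht => (hcS ht).1, hc.pairwise_sUnion.2 fun _ ht => (hcS ht).2⟩,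
      fun _ => subset_sUnion_of_mem⟩

section Doubling

variable {X : Type*} [PseudoMetricSpace X] [MeasurableSpace X] {μ : Measure X} {Cd : ℝ≥0}

lemma IsDoublingWith.measure_ball_pos (h : IsDoublingWith μ Cd) (x : X) {r : ℝ} (hr : 0 < r) :
    0 < μ (ball x r) := by
  simpa [mul_div_cancel₀ r two_ne_zero] using (h x (r / 2) (half_pos hr)).1

lemma IsDoublingWith.measure_ball_lt_top (h : IsDoublingWith μ Cd) (x : X) (r : ℝ) :
    μ (ball x r) < ∞ := by
  rcases le_or_gt r 0 with hr | hr
  · simp [ball_eq_empty.2 hr]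
  · obtain ⟨-, hle, hlt⟩ := h x (r / 2) (half_pos hr)
    simpa [mul_div_cancel₀ r two_ne_zero] using hle.trans_lt hlt

lemma IsDoublingWith.measure_ball_two_pow_mul_le (h : IsDoublingWith μ Cd) (x : X) {r : ℝ}
    (hr : 0 < r) (n : ℕ) : μ (ball x (2 ^ n * r)) ≤ Cd ^ n * μ (ball x r) := by
  induction n with
  | zero => simp
  | succ n ih =>
    calc μ (ball x (2 ^ (n + 1) * r)) = μ (ball x (2 * (2 ^ n * r))) := by ring_nf
      _ ≤ Cd * μ (ball x (2 ^ n * r)) := (h x _ (by positivity)).2.1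
      _ ≤ Cd * (Cd ^ n * μ (ball x r)) := by gcongr
      _ = Cd ^ (n + 1) * μ (ball x r) := by ring

lemma IsDoublingWith.finite_of_isSeparated [OpensMeasurableSpace X] (h : IsDoublingWith μ Cd)
    {x : X} {r : ℝ} {δ : ℝ≥0} (hδ : 0 < δ) {C : Set X} (hCx : C ⊆ ball x r)
    (hC : IsSeparated δ C) : C.Finite := by
  rcases C.eq_empty_or_nonempty with rfl | ⟨y₀, hy₀⟩
  · exact finite_empty
  have hr : 0 < r := dist_nonneg.trans_lt (hCx hy₀)
  obtain ⟨n, hn⟩ := pow_unbounded_of_one_lt ((2 * r + δ) / (δ / 2)) one_lt_two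
  have hn : 2 * r + δ < 2 ^ n * (δ / 2) := by rwa [div_lt_iff₀ (by positivity)] at hn
  set B := μ (ball x (r + δ))
  have hB : B ≠ 0 := (h.measure_ball_pos x (by positivity)).ne'
  have hB' : B ≠ ∞ := (h.measure_ball_lt_top x _).ne
  have hsmall : ∀ y ∈ C, B ≤ Cd ^ n * μ (ball y (δ / 2)) := fun y hy =>
    (measure_mono (ball_subset_ball' (by linarith [mem_ball'.1 (hCx hy)]))).trans
      (h.measure_ball_two_pow_mul_le y (by positivity) n)
  have hcard : ∀ T : Finset X, ↑T ⊆ C → (T.card : ℝ≥0∞) ≤ Cd ^ n := by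
    intro T hT
    have hdisj : (T : Set X).PairwiseDisjoint fun y => ball y (δ / 2) := by
      intro y hy z hz hyz
      have hyz : (δ : ℝ≥0∞) < edist y z := hC (hT hy) (hT hz) hyz
      rw [edist_nndist, ENNReal.coe_lt_coe, ← NNReal.coe_lt_coe, coe_nndist] at hyz
      exact ball_disjoint_ball (by linarith)
    have : (T.card : ℝ≥0∞) * B ≤ Cd ^ n * B :=
      calc (T.card : ℝ≥0∞) * B = ∑ y ∈ T, B := by simp
        _ ≤ ∑ y ∈ T, Cd ^ n * μ (ball y (δ / 2)) := Finset.sum_le_sum fun y hy => hsmall y (hT hy)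
        _ = Cd ^ n * μ (⋃ y ∈ T, ball y (δ / 2)) := by
          rw [measure_biUnion_finset hdisj fun _ _ => measurableSet_ball, Finset.mul_sum]
        _ ≤ Cd ^ n * B := by
          gcongr
          refine measure_mono (iUnion₂_subset fun y (hy : y ∈ T) =>
            ball_subset_ball' (by linarith [mem_ball.1 (hCx (hT hy))]))
    exact (ENNReal.mul_le_mul_iff_left hB hB').1 this
  by_contra hinf
  obtain ⟨m, hm⟩ := ENNReal.exists_nat_gt (ENNReal.pow_ne_top ENNReal.coe_ne_top : (Cd : ℝ≥0∞) ^ n ≠ ∞)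
  obtain ⟨T, hT, rfl⟩ := Set.Infinite.exists_subset_card_eq hinf m
  exact (hcard T hT).not_gt hm

lemma IsDoublingWith.totallyBounded_ball [OpensMeasurableSpace X] (h : IsDoublingWith μ Cd)
    (x : X) (r : ℝ) : TotallyBounded (ball x r) := by
  refine Metric.totallyBounded_iff.2 fun ε hε => ?_
  obtain ⟨N, hN⟩ := exists_maximal_isSeparated ((ε / 2).toNNReal : ℝ≥0∞) (ball x r)
  refine ⟨N, h.finite_of_isSeparated (by simpa using hε) hN.prop.1 hN.prop.2, ?_⟩
  refine (IsCover.of_maximal_isSeparated hN).subset_iUnion_closedBall.trans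
    (iUnion₂_mono fun y _ => closedBall_subset_ball ?_)
  rw [Real.coe_toNNReal _ (by positivity)]
  linarith

lemma IsDoublingWith.properSpace [OpensMeasurableSpace X] [CompleteSpace X]
    (h : IsDoublingWith μ Cd) : ProperSpace X :=
  ⟨fun x r => ((h.totallyBounded_ball x (r + 1)).subset
    (closedBall_subset_ball (lt_add_one r))).isCompact_of_isClosed isClosed_closedBall⟩

lemma IsDoublingWith.isLocallyFiniteMeasure (h : IsDoublingWith μ Cd) : IsLocallyFiniteMeasure μ :=
  ⟨fun x => ⟨ball x 1, ball_mem_nhds x one_pos, h.measure_ball_lt_top x 1⟩⟩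

end Doubling

section MoreauYosida

variable {X : Type*} [PseudoMetricSpace X] {g : X → ℝ}

def moreauYosida (g : X → ℝ) (k : ℕ) (x : X) : ℝ := ⨅ y, g y + k * dist x y

lemma bddBelow_range_add_mul_dist (hg : BddBelow (range g)) (k : ℕ) (x : X) :
    BddBelow (range fun y => g y + k * dist x y) := by
  obtain ⟨b, hb⟩ := hg
  refine ⟨b, ?_⟩
  rintro _ ⟨y, rfl⟩
  have : 0 ≤ (k : ℝ) * dist x y := by positivity
  linarith [hb (mem_range_self y)]

lemma moreauYosida_le (hg : BddBelow (range g)) (k : ℕ) (x : X) : moreauYosida g k x ≤ g x := by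
  simpa [moreauYosida] using ciInf_le (bddBelow_range_add_mul_dist hg k x) x

lemma le_moreauYosida [Nonempty X] {b : ℝ} (hb : ∀ y, b ≤ g y) (k : ℕ) (x : X) :
    b ≤ moreauYosida g k x :=
  le_ciInf fun y => by
    have : 0 ≤ (k : ℝ) * dist x y := by positivity
    linarith [hb y]

lemma moreauYosida_mono [Nonempty X] (hg : BddBelow (range g)) (x : X) :
    Monotone fun k => moreauYosida g k x :=
  monotone_nat_of_le_succ fun k => le_ciInf fun y =>
    (ciInf_le (bddBelow_range_add_mul_dist hg k x) y).trans (by gcongr; simp)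

lemma lipschitzWith_moreauYosida [Nonempty X] (hg : BddBelow (range g)) (k : ℕ) :
    LipschitzWith k (moreauYosida g k) := by
  refine LipschitzWith.of_le_add_mul _ fun x z => sub_le_iff_le_add.1 (le_ciInf fun y => ?_)
  have := ciInf_le (bddBelow_range_add_mul_dist hg k x) y
  have := mul_le_mul_of_nonneg_left (dist_triangle x z y) k.cast_nonneg
  simp only [moreauYosida, NNReal.coe_natCast] at *
  linarith

lemma tendsto_moreauYosida [Nonempty X] (hg : BddBelow (range g)) (hlsc : LowerSemicontinuous g)
    (x : X) : Tendsto (fun k => moreauYosida g k x) atTop (𝓝 (g x)) := by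
  refine tendsto_order.2 ⟨fun c hc => ?_, fun c hc => .of_forall fun k =>
    (moreauYosida_le hg k x).trans_lt hc⟩
  obtain ⟨c', hcc', hc'⟩ := exists_between hc
  obtain ⟨δ, hδ, hball⟩ := Metric.eventually_nhds_iff.1 (hlsc x c' hc')
  obtain ⟨b, hb⟩ := hg
  obtain ⟨k, hk⟩ := exists_nat_ge ((c' - b) / δ)
  rw [div_le_iff₀ hδ] at hk
  -- near `x`, `g > c'` by semicontinuity; far from `x`, the penalty `k * dist` exceeds `c' - b`
  have hk : c' ≤ moreauYosida g k x := le_ciInf fun y => by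
    have : 0 ≤ (k : ℝ) * dist x y := by positivity
    rcases lt_or_ge (dist y x) δ with hy | hy
    · linarith [hball hy]
    · nlinarith [hb (mem_range_self y), dist_comm x y]
  exact eventually_atTop.2
    ⟨k, fun j hj => hcc'.trans_le (hk.trans (moreauYosida_mono ⟨b, hb⟩ x hj))⟩

end MoreauYosida

section Curves

variable {X : Type*}

def concatCurve (γ γ' : ℝ → X) (L : ℝ) (t : ℝ) : X := if t ≤ L then γ t else γ' (t - L)

variable {γ γ' : ℝ → X} {L L' : ℝ}

lemma concatCurve_eqOn_left : EqOn (concatCurve γ γ' L) γ (Iic L) := fun _ ht => if_pos ht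

lemma concatCurve_eqOn_right (h : γ L = γ' 0) :
    EqOn (concatCurve γ γ' L) (fun t => γ' (t - L)) (Ici L) := by
  intro t (ht : L ≤ t)
  rcases ht.eq_or_lt with rfl | ht
  · simp [concatCurve, h]
  · exact if_neg ht.not_ge

variable [PseudoMetricSpace X]

lemma LipschitzOnWith.Icc_union {γ : ℝ → X} {K : ℝ≥0} {a b c : ℝ}
    (hab : LipschitzOnWith K γ (Icc a b)) (hbc : LipschitzOnWith K γ (Icc b c)) :
    LipschitzOnWith K γ (Icc a c) := by
  refine LipschitzOnWith.of_dist_le_mul fun s hs t ht => ?_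
  wlog hst : s ≤ t generalizing s t
  · rw [dist_comm, dist_comm s]; exact this t ht s hs (le_of_not_ge hst)
  rcases le_total t b with htb | hbt
  · exact hab.dist_le_mul s ⟨hs.1, hst.trans htb⟩ t ⟨ht.1, htb⟩
  rcases le_total b s with hbs | hsb
  · exact hbc.dist_le_mul s ⟨hbs, hs.2⟩ t ⟨hbt, ht.2⟩
  calc dist (γ s) (γ t) ≤ dist (γ s) (γ b) + dist (γ b) (γ t) := dist_triangle _ _ _
    _ ≤ K * dist s b + K * dist b t := add_le_add
        (hab.dist_le_mul s ⟨hs.1, hsb⟩ b ⟨hs.1.trans hsb, le_rfl⟩)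
        (hbc.dist_le_mul b ⟨le_rfl, hbt.trans ht.2⟩ t ⟨hbt, ht.2⟩)
    _ = K * dist s t := by
        simp only [Real.dist_eq, abs_of_nonpos (sub_nonpos.2 hsb), abs_of_nonpos (sub_nonpos.2 hbt),
          abs_of_nonpos (sub_nonpos.2 hst)]
        ring

lemma LipschitzOnWith.intervalIntegrable_comp {K : ℝ≥0} (hγ : LipschitzOnWith K γ (Icc 0 L))
    (hL : 0 ≤ L) {g : X → ℝ} (hg : Continuous g) :
    IntervalIntegrable (fun t => g (γ t)) volume 0 L :=
  (hg.comp_continuousOn (uIcc_of_le hL ▸ hγ.continuousOn)).intervalIntegrable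

lemma LipschitzOnWith.concatCurve (hγ : LipschitzOnWith 1 γ (Icc 0 L))
    (hγ' : LipschitzOnWith 1 γ' (Icc 0 L')) (h : γ L = γ' 0) :
    LipschitzOnWith 1 (concatCurve γ γ' L) (Icc 0 (L + L')) := by
  have congr {f f' : ℝ → X} {s : Set ℝ} (hf : LipschitzOnWith 1 f s) (hff' : EqOn f f' s) :
      LipschitzOnWith 1 f' s := fun x hx y hy => by rw [← hff' hx, ← hff' hy]; exact hf hx hy
  have hshift : LipschitzOnWith 1 (fun t => γ' (t - L)) (Icc L (L + L')) := by
    refine LipschitzOnWith.of_dist_le_mul fun s hs t ht => ?_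
    rw [← dist_sub_right s t L]
    exact hγ'.dist_le_mul _ ⟨by linarith [hs.1], by linarith [hs.2]⟩ _
      ⟨by linarith [ht.1], by linarith [ht.2]⟩
  exact (congr hγ fun t ht => (concatCurve_eqOn_left ht.2).symm).Icc_union
    (congr hshift fun t ht => (concatCurve_eqOn_right h ht.1).symm)

lemma integral_comp_concatCurve (hL : 0 ≤ L) (hL' : 0 ≤ L') (hγ : LipschitzOnWith 1 γ (Icc 0 L))
    (hγ' : LipschitzOnWith 1 γ' (Icc 0 L')) (h : γ L = γ' 0) {g : X → ℝ} (hg : Continuous g) :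
    ∫ t in (0 : ℝ)..L + L', g (concatCurve γ γ' L t) =
      (∫ t in (0 : ℝ)..L, g (γ t)) + ∫ t in (0 : ℝ)..L', g (γ' t) := by
  have hint := (hγ.concatCurve hγ' h).intervalIntegrable_comp (by linarith) hg
  have hsub {a b : ℝ} (ha : 0 ≤ a) (hab : a ≤ b) (hb : b ≤ L + L') :
      IntervalIntegrable (fun t => g (concatCurve γ γ' L t)) volume a b :=
    hint.mono_set (by rw [uIcc_of_le hab, uIcc_of_le (by linarith)]; exact Icc_subset_Icc ha hb)
  rw [← intervalIntegral.integral_add_adjacent_intervals (hsub le_rfl hL (by linarith))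
    (hsub hL (by linarith) le_rfl)]
  congr 1
  · exact intervalIntegral.integral_congr fun t ht =>
      congrArg g (concatCurve_eqOn_left (uIcc_of_le hL ▸ ht).2)
  · calc ∫ t in L..L + L', g (concatCurve γ γ' L t) = ∫ t in L..L + L', g (γ' (t - L)) :=
          intervalIntegral.integral_congr fun t ht =>
            congrArg g (concatCurve_eqOn_right h (uIcc_of_le (by linarith : L ≤ L + L') ▸ ht).1)
      _ = ∫ t in (0 : ℝ)..L', g (γ' t) := by
          simp [intervalIntegral.integral_comp_sub_right (fun t => g (γ' t)) L]

end Curves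

section CurveInfConv

variable {X : Type*} [PseudoMetricSpace X] {f g : X → ℝ}

lemma LipschitzOnWith.reverse {γ : ℝ → X} {L : ℝ} (hγ : LipschitzOnWith 1 γ (Icc 0 L)) :
    LipschitzOnWith 1 (fun t => γ (L - t)) (Icc 0 L) :=
  LipschitzOnWith.of_dist_le_mul fun s hs t ht => by
    rw [← dist_sub_left L s t]
    exact hγ.dist_le_mul _ ⟨by linarith [hs.2], by linarith [hs.1]⟩ _
      ⟨by linarith [ht.2], by linarith [ht.1]⟩

def curveCosts (f g : X → ℝ) (x : X) : Set ℝ :=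
  {v | ∃ L, 0 ≤ L ∧ ∃ γ : ℝ → X, LipschitzOnWith 1 γ (Icc 0 L) ∧ γ 0 = x ∧
    f (γ L) + ∫ t in (0 : ℝ)..L, g (γ t) = v}

def curveInfConv (f g : X → ℝ) (x : X) : ℝ := sInf (curveCosts f g x)

lemma curveCosts_nonempty (x : X) : (curveCosts f g x).Nonempty :=
  ⟨f x, 0, le_rfl, fun _ => x, (LipschitzWith.const x).lipschitzOnWith.weaken zero_le_one, rfl,
    by simp⟩

variable (hf : ∀ x, 0 ≤ f x) (hg : ∀ x, 0 ≤ g x)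
include hf hg

lemma curveInfConv_le {L : ℝ} (hL : 0 ≤ L) {γ : ℝ → X} (hγ : LipschitzOnWith 1 γ (Icc 0 L)) :
    curveInfConv f g (γ 0) ≤ f (γ L) + ∫ t in (0 : ℝ)..L, g (γ t) := by
  refine csInf_le ⟨0, ?_⟩ ⟨L, hL, γ, hγ, rfl, rfl⟩
  rintro _ ⟨_, hL', γ', -, -, rfl⟩
  exact add_nonneg (hf _) (intervalIntegral.integral_nonneg hL' fun _ _ => hg _)

lemma curveInfConv_le_self (x : X) : curveInfConv f g x ≤ f x := by
  simpa using curveInfConv_le hf hg le_rfl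
    ((LipschitzWith.const x).lipschitzOnWith.weaken zero_le_one (s := Icc 0 0))

omit hf hg in
lemma le_curveInfConv {x : X} {c : ℝ} (h : ∀ L, 0 ≤ L → ∀ γ : ℝ → X,
    LipschitzOnWith 1 γ (Icc 0 L) → γ 0 = x → c ≤ f (γ L) + ∫ t in (0 : ℝ)..L, g (γ t)) :
    c ≤ curveInfConv f g x :=
  le_csInf (curveCosts_nonempty x) fun _ ⟨L, hL, γ, hγ, hγ0, hv⟩ => hv ▸ h L hL γ hγ hγ0

lemma curveInfConv_nonneg (x : X) : 0 ≤ curveInfConv f g x :=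
  le_curveInfConv fun _ hL _ _ _ =>
    add_nonneg (hf _) (intervalIntegral.integral_nonneg hL fun _ _ => hg _)

omit hf hg in
lemma exists_curve_lt_of_curveInfConv_lt {x : X} {c : ℝ} (h : curveInfConv f g x < c) :
    ∃ L, 0 ≤ L ∧ ∃ γ : ℝ → X, LipschitzOnWith 1 γ (Icc 0 L) ∧ γ 0 = x ∧
      f (γ L) + ∫ t in (0 : ℝ)..L, g (γ t) < c := by
  obtain ⟨_, ⟨L, hL, γ, hγ, hγ0, rfl⟩, hv⟩ := exists_lt_of_csInf_lt (curveCosts_nonempty x) h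
  exact ⟨L, hL, γ, hγ, hγ0, hv⟩

lemma curveInfConv_le_add_integral (hgc : Continuous g) {L : ℝ} (hL : 0 ≤ L) {γ : ℝ → X}
    (hγ : LipschitzOnWith 1 γ (Icc 0 L)) :
    curveInfConv f g (γ 0) ≤ curveInfConv f g (γ L) + ∫ t in (0 : ℝ)..L, g (γ t) := by
  rw [← sub_le_iff_le_add]
  refine le_curveInfConv fun L' hL' γ' hγ' hγ'0 => sub_le_iff_le_add.2 ?_
  have hcat := curveInfConv_le hf hg (add_nonneg hL hL') (hγ.concatCurve hγ' hγ'0.symm)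
  rw [integral_comp_concatCurve hL hL' hγ hγ' hγ'0.symm hgc, concatCurve_eqOn_left hL,
    concatCurve_eqOn_right hγ'0.symm (le_add_of_nonneg_right hL')] at hcat
  simp only [add_sub_cancel_left] at hcat
  linarith

lemma isUpperGradientOf_curveInfConv (hgc : Continuous g) :
    IsUpperGradientOf g (curveInfConv f g) := by
  intro L hL γ hγ
  have h₁ := curveInfConv_le_add_integral hf hg hgc hL hγ
  have h₂ := curveInfConv_le_add_integral hf hg hgc hL hγ.reverse
  simp only [sub_zero, sub_self] at h₂
  rw [intervalIntegral.integral_comp_sub_left (fun t => g (γ t)), sub_self, sub_zero] at h₂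
  exact abs_sub_le_iff.2 ⟨by linarith, by linarith⟩

lemma lipschitzWith_curveInfConv (hX : IsGeodesic X) (hgc : Continuous g) {M : ℝ≥0}
    (hgM : ∀ x, g x ≤ M) : LipschitzWith M (curveInfConv f g) := by
  refine LipschitzWith.of_dist_le_mul fun x y => ?_
  obtain ⟨γ, hγ, hγ0, hγ1⟩ := hX x y
  have hug := isUpperGradientOf_curveInfConv hf hg hgc _ dist_nonneg γ hγ
  rw [hγ0, hγ1, ← Real.dist_eq] at hug
  refine hug.trans ?_
  calc ∫ t in (0 : ℝ)..dist x y, g (γ t) ≤ ∫ t in (0 : ℝ)..dist x y, (M : ℝ) :=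
        intervalIntegral.integral_mono_on dist_nonneg (hγ.intervalIntegrable_comp dist_nonneg hgc)
          intervalIntegrable_const fun t _ => hgM _
    _ = M * dist x y := by simp [mul_comm]

lemma curveInfConv_mono {g' : X → ℝ} (hgc : Continuous g) (hg'c : Continuous g')
    (hgg' : ∀ x, g x ≤ g' x) (x : X) : curveInfConv f g x ≤ curveInfConv f g' x :=
  le_curveInfConv fun L hL γ hγ hγ0 => by
    have := intervalIntegral.integral_mono_on hL (hγ.intervalIntegrable_comp hL hgc)
      (hγ.intervalIntegrable_comp hL hg'c) fun t _ => hgg' (γ t)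
    linarith [hγ0 ▸ curveInfConv_le hf hg hL hγ]

end CurveInfConv

section CurveCompactness

open BoundedContinuousFunction

variable {X : Type*} [MetricSpace X]

lemma LipschitzOnWith.comp_min {γ : ℝ → X} {L : ℝ} (hL : 0 ≤ L)
    (hγ : LipschitzOnWith 1 γ (Icc 0 L)) : LipschitzOnWith 1 (fun t => γ (min t L)) (Ici 0) :=
  LipschitzOnWith.of_dist_le_mul fun s hs t ht => by
    refine (hγ.dist_le_mul _ ⟨le_min hs hL, min_le_right _ _⟩ _
      ⟨le_min ht hL, min_le_right _ _⟩).trans ?_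
    simpa using (LipschitzWith.id.min_const L).dist_le_mul s t

variable [ProperSpace X]

lemma isCompact_setOf_lipschitzWith_one {S : ℝ} (hS : 0 ≤ S) (x : X) :
    IsCompact {F : Icc 0 S →ᵇ X | LipschitzWith 1 F ∧ F (projIcc 0 S hS 0) = x} := by
  have hclosed : IsClosed {F : Icc 0 S →ᵇ X | LipschitzWith 1 F ∧ F (projIcc 0 S hS 0) = x} :=
    ((isClosed_setOfPred_lipschitzWith (α := Icc 0 S) (β := X) 1).preimage continuous_coe).inter
      (isClosed_eq (continuous_eval_const _) continuous_const)
  rw [← hclosed.closure_eq]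
  refine arzela_ascoli (closedBall x S) (isCompact_closedBall x S) _ (fun F t hF => ?_)
    (LipschitzWith.uniformEquicontinuous _ 1 fun F => F.2.1).equicontinuous
  rw [mem_closedBall, ← hF.2]
  refine (hF.1.dist_le_mul _ _).trans ?_
  rw [NNReal.coe_one, one_mul, Subtype.dist_eq, projIcc_of_le_left hS le_rfl, Real.dist_eq,
    sub_zero, abs_of_nonneg t.2.1]
  exact t.2.2

lemma exists_subseq_tendsto_curve {x : X} {S : ℝ} {L : ℕ → ℝ} (hL : ∀ k, L k ∈ Icc 0 S)
    {γ : ℕ → ℝ → X} (hγ : ∀ k, LipschitzOnWith 1 (γ k) (Icc 0 (L k))) (hγ0 : ∀ k, γ k 0 = x) :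
    ∃ φ : ℕ → ℕ, StrictMono φ ∧ ∃ L₀, 0 ≤ L₀ ∧ ∃ γ₀ : ℝ → X, LipschitzOnWith 1 γ₀ (Icc 0 L₀) ∧
      γ₀ 0 = x ∧ Tendsto (fun k => γ (φ k) (L (φ k))) atTop (𝓝 (γ₀ L₀)) ∧
      ∀ h : X → ℝ, Continuous h → Tendsto (fun k => ∫ t in (0 : ℝ)..L (φ k), h (γ (φ k) t))
        atTop (𝓝 (∫ t in (0 : ℝ)..L₀, h (γ₀ t))) := by
  have hS : 0 ≤ S := (hL 0).1.trans (hL 0).2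
  have hlip (k : ℕ) : LipschitzWith 1 ((Icc 0 S).domRestrict fun t => γ k (min t (L k))) :=
    (((hγ k).comp_min (hL k).1).mono Icc_subset_Ici_self).to_restrict
  -- the curves stopped at their endpoints, as points of a compact subset of `C(Icc 0 S, X)`
  let F (k : ℕ) : Icc 0 S →ᵇ X := .mkOfCompact ⟨_, (hlip k).continuous⟩
  have hF (k : ℕ) {t : ℝ} (ht : t ∈ Icc 0 (L k)) : F k (projIcc 0 S hS t) = γ k t := by
    simp [F, projIcc_of_mem hS ⟨ht.1, ht.2.trans (hL k).2⟩, min_eq_left ht.2]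
  obtain ⟨⟨F₀, L₀⟩, ⟨hF₀, hL₀⟩, φ, hφ, hlim⟩ :=
    ((isCompact_setOf_lipschitzWith_one hS x).prod isCompact_Icc).tendsto_subseq
      (x := fun k => (F k, L k)) fun k => ⟨⟨hlip k, (hF k ⟨le_rfl, (hL k).1⟩).trans (hγ0 k)⟩, hL k⟩
  have hcont : Continuous fun p : (Icc 0 S →ᵇ X) × ℝ => p.1 (projIcc 0 S hS p.2) :=
    continuous_fst.eval ((continuous_projIcc (h := hS)).comp continuous_snd)
  refine ⟨φ, hφ, L₀, hL₀.1, fun t => F₀ (projIcc 0 S hS t),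
    ((hF₀.1.comp (LipschitzWith.projIcc hS)).weaken (by simp)).lipschitzOnWith, hF₀.2, ?_,
    fun h hh => ?_⟩
  · exact ((hcont.tendsto _).comp hlim).congr fun k => hF _ ⟨(hL _).1, le_rfl⟩
  · have := intervalIntegral.continuous_parametric_intervalIntegral_of_continuous (a₀ := 0)
      (μ := volume) (f := fun (p : (Icc 0 S →ᵇ X) × ℝ) t => h (p.1 (projIcc 0 S hS t)))
      (hh.comp (continuous_fst.fst.eval ((continuous_projIcc (h := hS)).comp continuous_snd)))
      continuous_snd
    refine ((this.tendsto _).comp hlim).congr fun k =>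
      intervalIntegral.integral_congr fun t ht => ?_
    simp [hF _ (uIcc_of_le (hL _).1 ▸ ht)]

end CurveCompactness

section Convergence

variable {X : Type*} [MetricSpace X] [ProperSpace X] {f g : X → ℝ} {G : ℕ → X → ℝ}

lemma exists_curve_cost_le_of_forall_cost_le (hf : Continuous f) (hG : ∀ j, Continuous (G j))
    (hGmono : ∀ y, Monotone (G · y)) (hGg : ∀ y, Tendsto (G · y) atTop (𝓝 (g y)))
    (hG0 : ∀ j y, 0 ≤ G j y) {M : ℝ} (hgM : ∀ y, g y ≤ M)
    {x : X} {S c : ℝ} {L : ℕ → ℝ} (hL : ∀ k, L k ∈ Icc 0 S) {γ : ℕ → ℝ → X}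
    (hγ : ∀ k, LipschitzOnWith 1 (γ k) (Icc 0 (L k))) (hγ0 : ∀ k, γ k 0 = x)
    (hcost : ∀ k, f (γ k (L k)) + ∫ t in (0 : ℝ)..L k, G k (γ k t) ≤ c) :
    ∃ L₀, 0 ≤ L₀ ∧ ∃ γ₀ : ℝ → X, LipschitzOnWith 1 γ₀ (Icc 0 L₀) ∧ γ₀ 0 = x ∧
      f (γ₀ L₀) + ∫ t in (0 : ℝ)..L₀, g (γ₀ t) ≤ c := by
  obtain ⟨φ, hφ, L₀, hL₀, γ₀, hγ₀, hγ₀0, hend, hint⟩ := exists_subseq_tendsto_curve hL hγ hγ0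
  refine ⟨L₀, hL₀, γ₀, hγ₀, hγ₀0, ?_⟩
  have hcost_j (j : ℕ) : f (γ₀ L₀) + ∫ t in (0 : ℝ)..L₀, G j (γ₀ t) ≤ c := by
    refine le_of_tendsto (((hf.tendsto _).comp hend).add (hint _ (hG j)))
      (eventually_atTop.2 ⟨j, fun k hk => (add_le_add le_rfl ?_).trans (hcost (φ k))⟩)
    have hL := (hL (φ k)).1
    exact intervalIntegral.integral_mono_on hL ((hγ _).intervalIntegrable_comp hL (hG j))
      ((hγ _).intervalIntegrable_comp hL (hG _)) fun t _ => hGmono _ (hk.trans hφ.le_apply)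
  have hGM (j : ℕ) (y : X) : ‖G j y‖ ≤ M := by
    rw [Real.norm_of_nonneg (hG0 j y)]
    exact ((hGmono y).ge_of_tendsto (hGg y) j).trans (hgM y)
  have hlim : Tendsto (fun j => ∫ t in (0 : ℝ)..L₀, G j (γ₀ t)) atTop
      (𝓝 (∫ t in (0 : ℝ)..L₀, g (γ₀ t))) :=
    intervalIntegral.tendsto_integral_filter_of_dominated_convergence (fun _ => M)
      (.of_forall fun j => (intervalIntegrable_iff.1 (hγ₀.intervalIntegrable_comp hL₀ (hG j))).1)
      (.of_forall fun j => .of_forall fun t _ => hGM j (γ₀ t)) intervalIntegrable_const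
      (.of_forall fun t _ => hGg (γ₀ t))
  exact le_of_tendsto' (tendsto_const_nhds.add hlim) hcost_j

lemma tendsto_curveInfConv (hf0 : ∀ x, 0 ≤ f x) (hf : Continuous f) (hfg : IsUpperGradientOf g f)
    (hG : ∀ j, Continuous (G j)) (hGmono : ∀ y, Monotone (G · y))
    (hGg : ∀ y, Tendsto (G · y) atTop (𝓝 (g y))) {τ : ℝ} (hτ : 0 < τ) (hGτ : ∀ j y, τ ≤ G j y)
    {M : ℝ} (hgM : ∀ y, g y ≤ M) (x : X) :
    Tendsto (fun k => curveInfConv f (G k) x) atTop (𝓝 (f x)) := by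
  have hG0 (j : ℕ) (y : X) : 0 ≤ G j y := hτ.le.trans (hGτ j y)
  have hmono : Monotone fun k => curveInfConv f (G k) x := fun j k hjk =>
    curveInfConv_mono hf0 (hG0 j) (hG j) (hG k) (fun y => hGmono y hjk) x
  refine tendsto_order.2 ⟨fun c hc => ?_, fun c hc => .of_forall fun k =>
    (curveInfConv_le_self hf0 (hG0 k) x).trans_lt hc⟩
  suffices ∃ k, c < curveInfConv f (G k) x by
    obtain ⟨k, hk⟩ := this
    exact eventually_atTop.2 ⟨k, fun j hj => hk.trans_le (hmono hj)⟩
  by_contra! h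
  obtain ⟨c', hcc', hc'⟩ := exists_between hc
  choose L hL γ hγ hγ0 hcost using fun k => exists_curve_lt_of_curveInfConv_lt ((h k).trans_lt hcc')
  -- since `G k ≥ τ`, the almost minimizing curves have length at most `c' / τ`
  have hLS (k : ℕ) : L k ∈ Icc 0 (c' / τ) := by
    refine ⟨hL k, (le_div_iff₀ hτ).2 ?_⟩
    have := intervalIntegral.integral_mono_on (hL k) intervalIntegrable_const
      ((hγ k).intervalIntegrable_comp (hL k) (hG k)) fun t _ => hGτ k (γ k t)
    simp only [intervalIntegral.integral_const, sub_zero, smul_eq_mul] at this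
    linarith [hf0 (γ k (L k)), hcost k]
  obtain ⟨L₀, hL₀, γ₀, hγ₀, hγ₀0, hcost₀⟩ := exists_curve_cost_le_of_forall_cost_le hf hG hGmono
    hGg hG0 hgM hLS hγ hγ0 fun k => (hcost k).le
  have := hfg L₀ hL₀ γ₀ hγ₀
  rw [hγ₀0] at this
  linarith [le_abs_self (f x - f (γ₀ L₀))]

end Convergence

lemma tendstoL1loc_univ_of_tendsto {X : Type*} [PseudoMetricSpace X] [ProperSpace X]
    [MeasurableSpace X] [OpensMeasurableSpace X] {μ : Measure X} {u : ℕ → X → ℝ} {v : X → ℝ}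
    (hu : ∀ n, Measurable (u n)) (hu0 : ∀ n x, 0 ≤ u n x) (huv : ∀ n x, u n x ≤ v x)
    (hv : LocallyIntegrable v μ) (hlim : ∀ x, Tendsto (u · x) atTop (𝓝 (v x))) :
    TendstoL1loc μ u v univ := by
  intro K hK hKb _
  have hvm : Measurable v := measurable_of_tendsto_metrizable hu (tendsto_pi_nhds.2 hlim)
  have := tendsto_lintegral_of_dominated_convergence (μ := μ.restrict K)
    (F := fun n x => ENNReal.ofReal |u n x - v x|) (f := fun _ => 0)
    (fun x => ENNReal.ofReal (v x)) (fun n => ((hu n).sub hvm).abs.ennreal_ofReal)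
    (fun n => .of_forall fun x => ENNReal.ofReal_le_ofReal (by
      rw [abs_sub_comm, abs_of_nonneg (sub_nonneg.2 (huv n x))]; linarith [hu0 n x]))
    (hv.integrableOn_isCompact (isCompact_of_isClosed_isBounded hK hKb)).lintegral_lt_top.ne
    (.of_forall fun x => by
      simpa using ENNReal.tendsto_ofReal (((hlim x).sub_const (v x)).abs))
  simpa using this

theorem statement16_general {X : Type u} [MetricSpace X] [MeasurableSpace X] [BorelSpace X]
    (μ : Measure X) (Cd : ℝ≥0) (CP : ℝ)
    (hX : GoodSpace X μ Cd CP)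
    (f : X → ℝ) (hf0 : ∀ x, 0 ≤ f x) (hfLip : ∃ L : ℝ≥0, LipschitzWith L f)
    (τ : ℝ) (hτ : 0 < τ) (g : X → ℝ) (hgτ : ∀ x, τ ≤ g x)
    (hgbdd : ∃ M : ℝ, ∀ x, g x ≤ M)
    (hglsc : LowerSemicontinuous g)
    (hgloc : LocallyIntegrable g μ)
    (hgug : IsUpperGradientOf g f) :
    ∃ (fk : ℕ → X → ℝ) (gk : ℕ → X → ℝ),
      (∀ k, ∃ L : ℝ≥0, LipschitzWith L (fk k)) ∧
      TendstoL1loc μ fk f Set.univ ∧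
      (∀ k, ∃ L : ℝ≥0, LipschitzWith L (gk k)) ∧
      (∀ k, ∃ M : ℝ, ∀ x, gk k x ≤ M) ∧
      (∀ k x, τ ≤ gk k x) ∧
      (∀ k, IsUpperGradientOf (gk k) (fk k)) ∧
      (∀ k x, gk k x ≤ gk (k + 1) x) ∧
      (∀ k x, gk k x ≤ g x) ∧
      (∀ x, Tendsto (fun k => gk k x) atTop (𝓝 (g x))) ∧
      TendstoL1loc μ gk g Set.univ := by
  obtain ⟨hnontriv, hcomplete, hgeo, hdoubling, -⟩ := hX
  have := hdoubling.properSpace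
  have := hdoubling.isLocallyFiniteMeasure
  obtain ⟨M, hgM⟩ := hgbdd
  obtain ⟨_, hfLip⟩ := hfLip
  have hgb : BddBelow (range g) := ⟨τ, forall_mem_range.2 hgτ⟩
  have hgkc (k : ℕ) : Continuous (moreauYosida g k) := (lipschitzWith_moreauYosida hgb k).continuous
  have hgkτ (k : ℕ) (x : X) : τ ≤ moreauYosida g k x := le_moreauYosida hgτ k x
  have hgk0 (k : ℕ) (x : X) : 0 ≤ moreauYosida g k x := hτ.le.trans (hgkτ k x)
  have hgkg := moreauYosida_le hgb
  have hgkM (k : ℕ) (x : X) : moreauYosida g k x ≤ M.toNNReal :=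
    ((hgkg k x).trans (hgM x)).trans (Real.le_coe_toNNReal M)
  have hgklim := tendsto_moreauYosida hgb hglsc
  have hfkc (k : ℕ) := lipschitzWith_curveInfConv hf0 (hgk0 k) hgeo (hgkc k) (hgkM k)
  refine ⟨fun k => curveInfConv f (moreauYosida g k), moreauYosida g, fun k => ⟨_, hfkc k⟩, ?_,
    fun k => ⟨k, lipschitzWith_moreauYosida hgb k⟩, fun k => ⟨M, fun x => (hgkg k x).trans (hgM x)⟩,
    hgkτ, fun k => isUpperGradientOf_curveInfConv hf0 (hgk0 k) (hgkc k),
    fun k x => moreauYosida_mono hgb x k.le_succ, hgkg, hgklim,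
    tendstoL1loc_univ_of_tendsto (fun k => (hgkc k).measurable) hgk0 hgkg hgloc hgklim⟩
  exact tendstoL1loc_univ_of_tendsto (fun k => (hfkc k).continuous.measurable)
    (fun k => curveInfConv_nonneg hf0 (hgk0 k)) (fun k => curveInfConv_le_self hf0 (hgk0 k))
    hfLip.continuous.locallyIntegrable fun x => tendsto_curveInfConv hf0 hfLip.continuous hgug hgkc
      (moreauYosida_mono hgb) hgklim hτ hgkτ hgM x

theorem statement16 {X : Type u} [MetricSpace X] [MeasurableSpace X] [BorelSpace X]
    (μ : Measure X) (Cd : ℝ≥0) (CP : ℝ) (hCd : 1 ≤ Cd) (hCP : 0 < CP)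
    (hX : GoodSpace X μ Cd CP)
    (f : X → ℝ) (hf0 : ∀ x, 0 ≤ f x) (hfLip : ∃ L : ℝ≥0, LipschitzWith L f)
    (τ : ℝ) (hτ : 0 < τ) (g : X → ℝ) (hgτ : ∀ x, τ ≤ g x)
    (hgbdd : ∃ M : ℝ, ∀ x, g x ≤ M)
    (hglsc : LowerSemicontinuous g)
    (hgcnt : (Set.range g).Countable)
    (hgloc : LocallyIntegrable g μ)
    (hgug : IsUpperGradientOf g f) :
    ∃ (fk : ℕ → X → ℝ) (gk : ℕ → X → ℝ),
      (∀ k, ∃ L : ℝ≥0, LipschitzWith L (fk k)) ∧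
      TendstoL1loc μ fk f Set.univ ∧
      (∀ k, ∃ L : ℝ≥0, LipschitzWith L (gk k)) ∧
      (∀ k, ∃ M : ℝ, ∀ x, gk k x ≤ M) ∧
      (∀ k x, τ ≤ gk k x) ∧
      (∀ k, IsUpperGradientOf (gk k) (fk k)) ∧
      (∀ k x, gk k x ≤ gk (k + 1) x) ∧
      (∀ k x, gk k x ≤ g x) ∧
      (∀ x, Tendsto (fun k => gk k x) atTop (𝓝 (g x))) ∧
      TendstoL1loc μ gk g Set.univ :=
  statement16_general μ Cd CP hX f hf0 hfLip τ hτ g hgτ hgbdd hglsc hgloc hgug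
end
end
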